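/- arXiv:2106.02911 — 3 statements merged into one kernel-verified Lean document; each statement's English description precedes it below -/
import Mathlib

section
/- Let a > 0 and let u ∈ H^2((0,a)) with u'(0) = u'(a) = 0. Denote by ū = (1/a)∫₀ᵃ u dx its mean. Then there exists a constant C_a > 0 depending only on a such that ∫₀ᵃ [ (u')² − (u − ū)² ] dx ≤ C_a ∫₀ᵃ ( u'' + u − ū )² dx. -/
open Real Set MeasureTheory intervalIntegral

/-!
Put `v = u - ū` and `f = v'' + v`. Integration by parts with the Neumann conditions gives
`∫ (v'² - v²) = -∫ v f`, so by Cauchy–Schwarz it suffices to bound `|∫ v f|` by a multiple of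
`(∫ |f|)²`. Since `v' cos + v sin` and `v' sin - v cos` have derivatives `cos · f` and `sin · f`,
`v x = v 0 cos x + sin x ∫₀ˣ cos · f - cos x ∫₀ˣ sin · f`, hence
`∫ v f = v 0 ∫₀ᵃ cos · f + O((∫ |f|)²)`. The condition `v' a = 0` gives
`v a sin a = ∫₀ᵃ cos · f`, which bounds the first term by `(1 + 1 / |sin a|) (∫ |f|)²`.
When `sin a = 0`, i.e. `1 = k²π²/a²` is a Neumann eigenvalue with eigenfunction `cos`, the same
identity says `f ⊥ cos` and the first term vanishes.
-/

theorem sq_integral_abs_le_mul_integral_sq {f : ℝ → ℝ} {a b : ℝ} (hab : a ≤ b)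
    (hf : IntervalIntegrable f volume a b)
    (hf2 : IntervalIntegrable (fun x => f x ^ 2) volume a b) :
    (∫ x in a..b, |f x|) ^ 2 ≤ (b - a) * ∫ x in a..b, f x ^ 2 := by
  rcases hab.eq_or_lt with rfl | hlt
  · simp
  set I := ∫ x in a..b, |f x|
  set c := I / (b - a)
  have hamgm : ∫ x in a..b, 2 * c * |f x| ≤ ∫ x in a..b, (f x ^ 2 + c ^ 2) :=
    integral_mono_on hab (hf.abs.const_mul _) (hf2.add intervalIntegrable_const) fun x _ => by
      nlinarith [sq_nonneg (|f x| - c), sq_abs (f x)]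
  rw [intervalIntegral.integral_const_mul, integral_add hf2 intervalIntegrable_const,
    intervalIntegral.integral_const, smul_eq_mul] at hamgm
  have hba : 0 < b - a := sub_pos.2 hlt
  have hc : c * (b - a) = I := div_mul_cancel₀ _ hba.ne'
  nlinarith

theorem abs_integral_mul_le_mul_integral_abs {g f : ℝ → ℝ} {a b K : ℝ} (hab : a ≤ b)
    (hf : IntervalIntegrable f volume a b) (hg : ∀ t ∈ Ioc a b, |g t| ≤ K) :
    |∫ t in a..b, g t * f t| ≤ K * ∫ t in a..b, |f t| := by
  rw [← intervalIntegral.integral_const_mul, ← Real.norm_eq_abs]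
  refine norm_integral_le_of_norm_le hab (ae_of_all _ fun t ht => ?_) (hf.abs.const_mul K)
  rw [Real.norm_eq_abs, abs_mul]
  exact mul_le_mul_of_nonneg_right (hg t ht) (abs_nonneg _)

theorem abs_integral_mul_le_integral_abs_of_mem_Icc {g f : ℝ → ℝ} {a b x : ℝ}
    (hf : IntervalIntegrable f volume a b) (hg : ∀ t, |g t| ≤ 1) (hx : x ∈ Icc a b) :
    |∫ t in a..x, g t * f t| ≤ ∫ t in a..b, |f t| :=
  calc |∫ t in a..x, g t * f t| ≤ 1 * ∫ t in a..x, |f t| :=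
        abs_integral_mul_le_mul_integral_abs hx.1
          (hf.mono_set (uIcc_subset_uIcc_left (Icc_subset_uIcc hx))) fun t _ => hg t
    _ ≤ ∫ t in a..b, |f t| := by
        rw [one_mul]
        exact integral_mono_interval le_rfl hx.1 hx.2 (ae_of_all _ fun t => abs_nonneg (f t))
          hf.abs

theorem integral_eq_sub_of_hasDerivWithinAt_Icc {g g' : ℝ → ℝ} {a b x : ℝ}
    (hg : ∀ y ∈ Icc a b, HasDerivWithinAt g (g' y) (Icc a b) y)
    (hg' : ContinuousOn g' (Icc a b)) (hx : x ∈ Icc a b) :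
    ∫ y in a..x, g' y = g x - g a := by
  have hsub : Icc a x ⊆ Icc a b := Icc_subset_Icc le_rfl hx.2
  refine integral_eq_sub_of_hasDerivAt_of_le hx.1
    (fun y hy => (hg y (hsub hy)).continuousWithinAt.mono hsub)
    (fun y hy => (hg y (hsub (Ioo_subset_Icc_self hy))).hasDerivAt
      (Icc_mem_nhds hy.1 (hy.2.trans_le hx.2)))
    ((hg'.mono hsub).intervalIntegrable_of_Icc hx.1)

-- For `s = 0` the junk value `|0|⁻¹ = 0` is harmless: then `y = 0`.
theorem abs_mul_le_sq_mul_inv_abs {x y s I : ℝ} (h : x * s = y) (hy : |y| ≤ I) :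
    |x * y| ≤ I ^ 2 * |s|⁻¹ := by
  rcases eq_or_ne s 0 with rfl | hs
  · simp [← h]
  rw [le_mul_inv_iff₀ (abs_pos.2 hs), ← abs_mul, mul_right_comm, h, abs_mul, ← sq]
  exact pow_le_pow_left₀ (abs_nonneg y) hy 2

section SecondOrder

variable {v v' v'' : ℝ → ℝ} {a b : ℝ}
  (hv : ∀ x ∈ Icc a b, HasDerivWithinAt v (v' x) (Icc a b) x)
  (hv' : ∀ x ∈ Icc a b, HasDerivWithinAt v' (v'' x) (Icc a b) x)
  (hv'' : ContinuousOn v'' (Icc a b))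
include hv hv' hv''

theorem integral_deriv_sq_sub_sq_eq_neg_integral_mul (hab : a ≤ b) (ha : v' a = 0)
    (hb : v' b = 0) :
    ∫ x in a..b, (v' x ^ 2 - v x ^ 2) = -∫ x in a..b, v x * (v'' x + v x) := by
  have hvc : ContinuousOn v (Icc a b) := fun x hx => (hv x hx).continuousWithinAt
  have hv'c : ContinuousOn v' (Icc a b) := fun x hx => (hv' x hx).continuousWithinAt
  have hint {g : ℝ → ℝ} (hg : ContinuousOn g (Icc a b)) : IntervalIntegrable g volume a b :=
    hg.intervalIntegrable_of_Icc hab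
  rw [← uIcc_of_le hab] at hv hv'
  have hparts := integral_mul_deriv_eq_deriv_mul_of_hasDerivWithinAt hv hv'
    (hint hv'c) (hint hv'')
  rw [ha, hb, mul_zero, mul_zero, sub_zero, zero_sub] at hparts
  simp only [mul_add, sq]
  have hvv : IntervalIntegrable (fun x => v x * v x) volume a b := hint (hvc.mul hvc)
  rw [integral_add (hint (g := fun x => v x * v'' x) (hvc.mul hv'')) hvv,
    integral_sub (hint (g := fun x => v' x * v' x) (hv'c.mul hv'c)) hvv, hparts]
  ring

theorem integral_cos_mul_add_eq {x : ℝ} (hx : x ∈ Icc a b) :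
    ∫ t in a..x, cos t * (v'' t + v t) =
      (v' x * cos x + v x * sin x) - (v' a * cos a + v a * sin a) := by
  refine integral_eq_sub_of_hasDerivWithinAt_Icc (g := fun y => v' y * cos y + v y * sin y)
    (fun y hy => ?_) ?_ hx
  · exact (((hv' y hy).mul (hasDerivAt_cos y).hasDerivWithinAt).add
      ((hv y hy).mul (hasDerivAt_sin y).hasDerivWithinAt)).congr_deriv (by ring)
  · exact continuous_cos.continuousOn.mul
      (hv''.add fun x hx => (hv x hx).continuousWithinAt)

theorem integral_sin_mul_add_eq {x : ℝ} (hx : x ∈ Icc a b) :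
    ∫ t in a..x, sin t * (v'' t + v t) =
      (v' x * sin x - v x * cos x) - (v' a * sin a - v a * cos a) := by
  refine integral_eq_sub_of_hasDerivWithinAt_Icc (g := fun y => v' y * sin y - v y * cos y)
    (fun y hy => ?_) ?_ hx
  · exact (((hv' y hy).mul (hasDerivAt_sin y).hasDerivWithinAt).sub
      ((hv y hy).mul (hasDerivAt_cos y).hasDerivWithinAt)).congr_deriv (by ring)
  · exact continuous_sin.continuousOn.mul
      (hv''.add fun x hx => (hv x hx).continuousWithinAt)

end SecondOrder

section Neumann

variable {v v' v'' : ℝ → ℝ} {a : ℝ}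
  (hv : ∀ x ∈ Icc 0 a, HasDerivWithinAt v (v' x) (Icc 0 a) x)
  (hv' : ∀ x ∈ Icc 0 a, HasDerivWithinAt v' (v'' x) (Icc 0 a) x)
  (hv'' : ContinuousOn v'' (Icc 0 a)) (h0 : v' 0 = 0)
include hv hv' hv'' h0

omit hv' h0 in
theorem intervalIntegrable_deriv2_add (ha : 0 ≤ a) :
    IntervalIntegrable (fun t => v'' t + v t) volume 0 a :=
  (hv''.add fun x hx => (hv x hx).continuousWithinAt).intervalIntegrable_of_Icc ha

theorem abs_sub_mul_cos_le_of_deriv_zero {x : ℝ} (hx : x ∈ Icc 0 a) :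
    |v x - v 0 * cos x| ≤ 2 * ∫ t in 0..a, |v'' t + v t| := by
  have hfi := intervalIntegrable_deriv2_add hv hv'' (hx.1.trans hx.2)
  have hcos := integral_cos_mul_add_eq hv hv' hv'' hx
  have hsin := integral_sin_mul_add_eq hv hv' hv'' hx
  have hA := abs_integral_mul_le_integral_abs_of_mem_Icc hfi abs_cos_le_one hx
  have hB := abs_integral_mul_le_integral_abs_of_mem_Icc hfi abs_sin_le_one hx
  set A := ∫ t in 0..x, cos t * (v'' t + v t)
  set B := ∫ t in 0..x, sin t * (v'' t + v t)
  set I := ∫ t in 0..a, |v'' t + v t|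
  have hsol : v x - v 0 * cos x = sin x * A - cos x * B := by
    rw [hcos, hsin, h0, cos_zero, sin_zero]
    linear_combination (-v x) * sin_sq_add_cos_sq x
  calc |v x - v 0 * cos x| ≤ |sin x| * |A| + |cos x| * |B| := by
        rw [hsol, ← abs_mul, ← abs_mul]
        exact abs_sub _ _
    _ ≤ 1 * I + 1 * I :=
        add_le_add (mul_le_mul (abs_sin_le_one x) hA (abs_nonneg _) zero_le_one)
          (mul_le_mul (abs_cos_le_one x) hB (abs_nonneg _) zero_le_one)
    _ = 2 * I := by ring

variable (ha : 0 ≤ a) (ha' : v' a = 0)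
include ha ha'

theorem abs_mul_integral_cos_mul_le :
    |v 0 * ∫ t in 0..a, cos t * (v'' t + v t)| ≤
      (1 + |sin a|⁻¹) * (∫ t in 0..a, |v'' t + v t|) ^ 2 := by
  have haI : a ∈ Icc 0 a := ⟨ha, le_rfl⟩
  have hfi := intervalIntegrable_deriv2_add hv hv'' ha
  have hcos := integral_cos_mul_add_eq hv hv' hv'' haI
  have hsin := integral_sin_mul_add_eq hv hv' hv'' haI
  have hC := abs_integral_mul_le_integral_abs_of_mem_Icc hfi abs_cos_le_one haI
  have hS := abs_integral_mul_le_integral_abs_of_mem_Icc hfi abs_sin_le_one haI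
  rw [ha', h0, cos_zero, sin_zero] at hcos hsin
  set C := ∫ t in 0..a, cos t * (v'' t + v t)
  set S := ∫ t in 0..a, sin t * (v'' t + v t)
  set I := ∫ t in 0..a, |v'' t + v t|
  have hvC : |v a * C| ≤ I ^ 2 * |sin a|⁻¹ :=
    abs_mul_le_sq_mul_inv_abs (by rw [hcos]; ring) hC
  calc |v 0 * C| = |S * C + cos a * (v a * C)| := by
        congr 1
        linear_combination (-C) * hsin
    _ ≤ |S| * |C| + |cos a| * |v a * C| := by
        rw [← abs_mul, ← abs_mul]
        exact abs_add_le _ _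
    _ ≤ I * I + 1 * (I ^ 2 * |sin a|⁻¹) :=
        add_le_add (mul_le_mul hS hC (abs_nonneg _) ((abs_nonneg _).trans hS))
          (mul_le_mul (abs_cos_le_one a) hvC (abs_nonneg _) zero_le_one)
    _ = (1 + |sin a|⁻¹) * I ^ 2 := by ring

theorem abs_integral_mul_deriv2_add_le :
    |∫ x in 0..a, v x * (v'' x + v x)| ≤
      (3 + |sin a|⁻¹) * (∫ x in 0..a, |v'' x + v x|) ^ 2 := by
  have hvc : ContinuousOn v (Icc 0 a) := fun x hx => (hv x hx).continuousWithinAt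
  have hfc : ContinuousOn (fun x => v'' x + v x) (Icc 0 a) := hv''.add hvc
  have hsplit : ∫ x in 0..a, v x * (v'' x + v x) =
      v 0 * (∫ x in 0..a, cos x * (v'' x + v x)) +
        ∫ x in 0..a, (v x - v 0 * cos x) * (v'' x + v x) := by
    rw [← intervalIntegral.integral_const_mul, ← intervalIntegral.integral_add]
    · congr 1
      ext x
      ring
    · exact ((continuous_cos.continuousOn.mul hfc).const_smul (v 0)).intervalIntegrable_of_Icc
        ha
    · exact ((hvc.sub (continuous_cos.continuousOn.const_smul (v 0))).mul hfc
        ).intervalIntegrable_of_Icc ha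
  set I := ∫ x in 0..a, |v'' x + v x|
  calc |∫ x in 0..a, v x * (v'' x + v x)|
      ≤ |v 0 * (∫ x in 0..a, cos x * (v'' x + v x))| +
          |∫ x in 0..a, (v x - v 0 * cos x) * (v'' x + v x)| := by
        rw [hsplit]
        exact abs_add_le _ _
    _ ≤ (1 + |sin a|⁻¹) * I ^ 2 + 2 * I * I :=
        add_le_add (abs_mul_integral_cos_mul_le hv hv' hv'' h0 ha ha')
          (abs_integral_mul_le_mul_integral_abs ha (intervalIntegrable_deriv2_add hv hv'' ha)
            fun x hx => abs_sub_mul_cos_le_of_deriv_zero hv hv' hv'' h0 (Ioc_subset_Icc_self hx))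
    _ = (3 + |sin a|⁻¹) * I ^ 2 := by ring

end Neumann

/-- Lojasiewicz–Simon type inequality: for a > 0 there is C_a > 0 (depending only on a)
such that for every H² (here C²) function u on [0,a] with Neumann boundary conditions,
∫ [(u')² − (u−ū)²] ≤ C_a ∫ (u'' + u − ū)². -/
theorem stmt0 (a : ℝ) (ha : 0 < a) :
    ∃ C : ℝ, 0 < C ∧ ∀ u u' u'' : ℝ → ℝ,
      (∀ x ∈ Icc (0:ℝ) a, HasDerivWithinAt u (u' x) (Icc 0 a) x) →
      (∀ x ∈ Icc (0:ℝ) a, HasDerivWithinAt u' (u'' x) (Icc 0 a) x) →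
      ContinuousOn u'' (Icc 0 a) →
      u' 0 = 0 → u' a = 0 →
      (∫ x in (0:ℝ)..a, ((u' x)^2 - (u x - (1/a) * ∫ y in (0:ℝ)..a, u y)^2)) ≤
        C * ∫ x in (0:ℝ)..a, (u'' x + u x - (1/a) * ∫ y in (0:ℝ)..a, u y)^2 := by
  refine ⟨a * (3 + |sin a|⁻¹), by positivity, fun u u' u'' hu hu' hu'' h0 ha' => ?_⟩
  set m := (1 / a) * ∫ y in (0:ℝ)..a, u y
  have hv : ∀ x ∈ Icc 0 a, HasDerivWithinAt (fun x => u x - m) (u' x) (Icc 0 a) x :=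
    fun x hx => (hu x hx).sub_const m
  have hfc : ContinuousOn (fun x => u'' x + (u x - m)) (Icc 0 a) :=
    hu''.add fun x hx => (hv x hx).continuousWithinAt
  have hCS := sq_integral_abs_le_mul_integral_sq ha.le (hfc.intervalIntegrable_of_Icc ha.le)
    ((hfc.pow 2).intervalIntegrable_of_Icc ha.le)
  simp only [add_sub_assoc]
  rw [integral_deriv_sq_sub_sq_eq_neg_integral_mul hv hu' hu'' ha.le h0 ha']
  calc _ ≤ |∫ x in 0..a, (u x - m) * (u'' x + (u x - m))| := neg_le_abs _
    _ ≤ (3 + |sin a|⁻¹) * (∫ x in 0..a, |u'' x + (u x - m)|) ^ 2 :=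
        abs_integral_mul_deriv2_add_le hv hu' hu'' h0 ha.le ha'
    _ ≤ (3 + |sin a|⁻¹) * ((a - 0) * ∫ x in 0..a, (u'' x + (u x - m)) ^ 2) := by gcongr
    _ = _ := by ring
end

section
/- Let w : [y₁, y₂] → ℝ be a C² solution of w'' + w − 1 = 0 with w(y₁) = w(y₂) = 0 and w > 0 on (y₁, y₂). Let M = max_{[y₁,y₂]} w, attained at y₀ ∈ (y₁,y₂). Then w(x) = (M−1)cos(x−y₀) + 1 for all x ∈ [y₁,y₂], the interval is symmetric about y₀ (i.e., y₂ − y₀ = y₀ − y₁), M ≥ 2, and π/2 < y₂ − y₀ ≤ π. -/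
open Real Set

/-!
Shifting by the cosine solution with the same data at the maximum point `y₀`, the difference
`u` satisfies `u'' = -u` with `u(y₀) = u'(y₀) = 0`; the energy `u² + u'²` is constant, hence `u = 0`
and `w(x) = c cos(x - y₀) + 1` with `c = M - 1`. The remaining claims are trigonometry of the
arch `t ↦ c cos t + 1`: positivity at `t = 0` forces `c > -1`, vanishing somewhere then forces
`c ≥ 1`, positivity at `t = ±π` bounds the arch by `π` on each side, and `cos` is injective on
`[0, π]`.
-/

theorem Convex.sq_add_sq_eq_of_hasDerivWithinAt {s : Set ℝ} (hs : Convex ℝ s) {u v : ℝ → ℝ}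
    (hu : ∀ x ∈ s, HasDerivWithinAt u (v x) s x) (hv : ∀ x ∈ s, HasDerivWithinAt v (-u x) s x)
    {x y : ℝ} (hx : x ∈ s) (hy : y ∈ s) : u y ^ 2 + v y ^ 2 = u x ^ 2 + v x ^ 2 := by
  have hE : ∀ z ∈ s, HasDerivWithinAt (fun z => u z ^ 2 + v z ^ 2) 0 s z := fun z hz =>
    (((hu z hz).fun_pow 2).fun_add ((hv z hz).fun_pow 2)).congr_deriv (by ring)
  simpa [sub_eq_zero] using
    hs.norm_image_sub_le_of_norm_hasDerivWithin_le hE (fun _ _ => norm_zero.le) hx hy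

theorem Convex.eq_zero_of_hasDerivWithinAt_of_eq_zero {s : Set ℝ} (hs : Convex ℝ s)
    {u v : ℝ → ℝ} (hu : ∀ x ∈ s, HasDerivWithinAt u (v x) s x)
    (hv : ∀ x ∈ s, HasDerivWithinAt v (-u x) s x) {x₀ : ℝ} (hx₀ : x₀ ∈ s)
    (hu₀ : u x₀ = 0) (hv₀ : v x₀ = 0) {x : ℝ} (hx : x ∈ s) : u x = 0 := by
  have h := hs.sq_add_sq_eq_of_hasDerivWithinAt hu hv hx₀ hx
  rw [hu₀, hv₀] at h
  nlinarith [sq_nonneg (u x), sq_nonneg (v x)]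

theorem Convex.eq_cos_of_hasDerivWithinAt {s : Set ℝ} (hs : Convex ℝ s) {w w' : ℝ → ℝ}
    (hw : ∀ x ∈ s, HasDerivWithinAt w (w' x) s x)
    (hw' : ∀ x ∈ s, HasDerivWithinAt w' (1 - w x) s x) {x₀ : ℝ} (hx₀ : x₀ ∈ s)
    (hcrit : w' x₀ = 0) {x : ℝ} (hx : x ∈ s) : w x = (w x₀ - 1) * cos (x - x₀) + 1 := by
  set c := w x₀ - 1
  have hcos : ∀ z, HasDerivAt (fun x => cos (x - x₀)) (-sin (z - x₀)) z := fun z => by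
    simpa [Function.comp_def] using
      (hasDerivAt_cos (z - x₀)).comp z ((hasDerivAt_id z).sub_const x₀)
  have hsin : ∀ z, HasDerivAt (fun x => sin (x - x₀)) (cos (z - x₀)) z := fun z => by
    simpa [Function.comp_def] using
      (hasDerivAt_sin (z - x₀)).comp z ((hasDerivAt_id z).sub_const x₀)
  have hu : ∀ z ∈ s, HasDerivWithinAt (fun x => w x - (c * cos (x - x₀) + 1))
      (w' z + c * sin (z - x₀)) s z := fun z hz =>
    ((hw z hz).fun_sub (((hcos z).const_mul c).add_const 1).hasDerivWithinAt).congr_deriv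
      (by ring)
  have hv : ∀ z ∈ s, HasDerivWithinAt (fun x => w' x + c * sin (x - x₀))
      (-(w z - (c * cos (z - x₀) + 1))) s z := fun z hz =>
    ((hw' z hz).fun_add ((hsin z).const_mul c).hasDerivWithinAt).congr_deriv (by ring)
  have h := hs.eq_zero_of_hasDerivWithinAt_of_eq_zero hu hv hx₀ (by simp [c]) (by simp [hcrit]) hx
  linarith

section CosArch

variable {a b c : ℝ}

theorem one_le_of_cos_arch (ha : a < 0) (hb : 0 < b) (hzb : c * cos b + 1 = 0)
    (hpos : ∀ t ∈ Ioo a b, 0 < c * cos t + 1) : 1 ≤ c := by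
  have hc : 0 < c + 1 := by simpa using hpos 0 ⟨ha, hb⟩
  have h1 := neg_one_le_cos b
  have h2 := cos_le_one b
  by_contra! hc1
  rcases le_or_gt 0 c with h | h <;> nlinarith

theorem le_pi_of_cos_arch (hc : 1 ≤ c) (hpos : ∀ t ∈ Ioo 0 b, 0 < c * cos t + 1) : b ≤ π := by
  by_contra! hb
  have := hpos π ⟨pi_pos, hb⟩
  rw [cos_pi] at this
  linarith

theorem pi_div_two_lt_of_cos_arch (hc : 0 ≤ c) (hb : 0 ≤ b) (hzb : c * cos b + 1 = 0) :
    π / 2 < b := by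
  by_contra! hb'
  have := cos_nonneg_of_mem_Icc ⟨by linarith [pi_pos], hb'⟩
  nlinarith

theorem cos_arch (ha : a < 0) (hb : 0 < b) (hza : c * cos a + 1 = 0) (hzb : c * cos b + 1 = 0)
    (hpos : ∀ t ∈ Ioo a b, 0 < c * cos t + 1) : a = -b ∧ 1 ≤ c ∧ π / 2 < b ∧ b ≤ π := by
  have hc := one_le_of_cos_arch ha hb hzb hpos
  have hb_le : b ≤ π := le_pi_of_cos_arch hc fun t ht => hpos t ⟨ha.trans ht.1, ht.2⟩
  have ha_le : -a ≤ π := le_pi_of_cos_arch hc fun t ht => by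
    simpa using hpos (-t) ⟨by linarith [ht.2], by linarith [ht.1]⟩
  have hcos : cos (-a) = cos b := by
    rw [cos_neg]
    exact mul_left_cancel₀ (by positivity : c ≠ 0) (by linarith)
  have := injOn_cos ⟨by linarith, ha_le⟩ ⟨hb.le, hb_le⟩ hcos
  exact ⟨by linarith, hc, pi_div_two_lt_of_cos_arch (by linarith) hb.le hzb, hb_le⟩

end CosArch

theorem stmt12_general (y₁ y₂ y₀ M : ℝ) (hy₀ : y₀ ∈ Ioo y₁ y₂)
    (w w' : ℝ → ℝ)
    (hw : ∀ x ∈ Icc y₁ y₂, HasDerivWithinAt w (w' x) (Icc y₁ y₂) x)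
    (hw' : ∀ x ∈ Icc y₁ y₂, HasDerivWithinAt w' (1 - w x) (Icc y₁ y₂) x)
    (hb1 : w y₁ = 0) (hb2 : w y₂ = 0)
    (hpos : ∀ x ∈ Ioo y₁ y₂, 0 < w x)
    (hmax : IsMaxOn w (Icc y₁ y₂) y₀) (hM : M = w y₀) :
    (∀ x ∈ Icc y₁ y₂, w x = (M - 1) * Real.cos (x - y₀) + 1) ∧
    y₂ - y₀ = y₀ - y₁ ∧ 2 ≤ M ∧ π/2 < y₂ - y₀ ∧ y₂ - y₀ ≤ π := by
  have hnhds : Icc y₁ y₂ ∈ nhds y₀ := Icc_mem_nhds hy₀.1 hy₀.2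
  have hcrit : w' y₀ = 0 := (hmax.isLocalMax hnhds).hasDerivAt_eq_zero
    ((hw y₀ (Ioo_subset_Icc_self hy₀)).hasDerivAt hnhds)
  have heq : ∀ x ∈ Icc y₁ y₂, w x = (M - 1) * cos (x - y₀) + 1 := fun x hx => hM ▸
    (convex_Icc y₁ y₂).eq_cos_of_hasDerivWithinAt hw hw' (Ioo_subset_Icc_self hy₀) hcrit hx
  have hza : (M - 1) * cos (y₁ - y₀) + 1 = 0 := by
    rw [← heq y₁ (left_mem_Icc.2 (hy₀.1.trans hy₀.2).le), hb1]
  have hzb : (M - 1) * cos (y₂ - y₀) + 1 = 0 := by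
    rw [← heq y₂ (right_mem_Icc.2 (hy₀.1.trans hy₀.2).le), hb2]
  obtain ⟨hsym, hc, hgt, hle⟩ := cos_arch (by linarith [hy₀.1]) (by linarith [hy₀.2]) hza hzb
    fun t ht => by
      have hx : y₀ + t ∈ Ioo y₁ y₂ := ⟨by linarith [ht.1], by linarith [ht.2]⟩
      simpa [heq _ (Ioo_subset_Icc_self hx)] using hpos _ hx
  exact ⟨heq, by linarith, by linarith, hgt, hle⟩

/-- Structure of a positive arch of w'' + w − 1 = 0 vanishing at both endpoints:
w(x) = (M−1)cos(x−y₀)+1, the interval is symmetric about the maximum point y₀,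
M ≥ 2 and π/2 < y₂ − y₀ ≤ π. -/
theorem stmt12 (y₁ y₂ y₀ M : ℝ) (h12 : y₁ < y₂) (hy₀ : y₀ ∈ Ioo y₁ y₂)
    (w w' : ℝ → ℝ)
    (hw : ∀ x ∈ Icc y₁ y₂, HasDerivWithinAt w (w' x) (Icc y₁ y₂) x)
    (hw' : ∀ x ∈ Icc y₁ y₂, HasDerivWithinAt w' (1 - w x) (Icc y₁ y₂) x)
    (hb1 : w y₁ = 0) (hb2 : w y₂ = 0)
    (hpos : ∀ x ∈ Ioo y₁ y₂, 0 < w x)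
    (hmax : IsMaxOn w (Icc y₁ y₂) y₀) (hM : M = w y₀) :
    (∀ x ∈ Icc y₁ y₂, w x = (M - 1) * Real.cos (x - y₀) + 1) ∧
    y₂ - y₀ = y₀ - y₁ ∧ 2 ≤ M ∧ π/2 < y₂ - y₀ ∧ y₂ - y₀ ≤ π :=
  stmt12_general y₁ y₂ y₀ M hy₀ w w' hw hw' hb1 hb2 hpos hmax hM
end

section
/- Let a > 0, let w ∈ C²([0,a]), and let u, v : [0,a] → ℝ with v = u − w, where w satisfies w'' + w − w̄ = 0 on (0,a) with w'(0) = w'(a) = 0 (w̄ being the mean of w), and u ∈ H¹((0,a)). Then ∫₀ᵃ [v_x² − (v − v̄)²] dx = ∫₀ᵃ [u_x² − (u − ū)²] dx, where v̄, ū are the means of v, u. -/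
open Set MeasureTheory
open scoped Interval

/-!
Write `B(f, g) = ∫ f' g' - (f - f̄)(g - ḡ)`, so that the energy is `E[f] = B(f, f)` and
`E[u - w] = E[u] - 2 B(u, w) + B(w, w)`. For a steady state `w` (`w'' = w̄ - w`, `w' = 0` at both
ends) an integration by parts gives `∫ f' w' = ∫ f (w - w̄)`, and since `w - w̄` has mean
zero the right-hand side equals `∫ (f - f̄)(w - w̄)`. Hence `B(f, w) = 0` for every `C¹`
function `f`, in particular for `f = u` and `f = w`.
-/

noncomputable def energyForm (a b : ℝ) (f f' g g' : ℝ → ℝ) : ℝ :=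
  ∫ x in a..b, (f' x * g' x - (f x - ⨍ y in a..b, f y) * (g x - ⨍ y in a..b, g y))

section

variable {a b : ℝ} {f f' g w w' : ℝ → ℝ}

theorem interval_average_sub (hf : IntervalIntegrable f volume a b)
    (hg : IntervalIntegrable g volume a b) :
    ⨍ x in a..b, (f x - g x) = (⨍ x in a..b, f x) - ⨍ x in a..b, g x := by
  simp only [interval_average_eq, intervalIntegral.integral_sub hf hg, smul_eq_mul, mul_sub]

theorem integral_sub_interval_average (hf : IntervalIntegrable f volume a b) :
    ∫ x in a..b, (f x - ⨍ y in a..b, f y) = 0 := by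
  rw [intervalIntegral.integral_sub hf intervalIntegrable_const, intervalIntegral.integral_const,
    interval_average_eq, smul_eq_mul, smul_eq_mul]
  rcases eq_or_ne a b with rfl | hab
  · simp
  · rw [mul_inv_cancel_left₀ (sub_ne_zero.2 hab.symm), sub_self]

theorem integral_sub_const_mul_sub_interval_average (c : ℝ)
    (hf : IntervalIntegrable (fun x ↦ f x * (g x - ⨍ y in a..b, g y)) volume a b)
    (hg : IntervalIntegrable g volume a b) :
    ∫ x in a..b, (f x - c) * (g x - ⨍ y in a..b, g y) =
      ∫ x in a..b, f x * (g x - ⨍ y in a..b, g y) := by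
  have hg₀ := hg.sub (intervalIntegrable_const (c := ⨍ y in a..b, g y))
  simp only [sub_mul, intervalIntegral.integral_sub hf (hg₀.const_mul c),
    intervalIntegral.integral_const_mul, integral_sub_interval_average hg, mul_zero, sub_zero]

theorem integral_deriv_mul_deriv_of_neumann {g' g'' : ℝ → ℝ}
    (hf : ∀ x ∈ [[a, b]], HasDerivWithinAt f (f' x) [[a, b]] x)
    (hf' : ContinuousOn f' [[a, b]])
    (hg' : ∀ x ∈ [[a, b]], HasDerivWithinAt g' (g'' x) [[a, b]] x)
    (hg'' : ContinuousOn g'' [[a, b]]) (ha : g' a = 0) (hb : g' b = 0) :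
    ∫ x in a..b, f' x * g' x = -∫ x in a..b, f x * g'' x := by
  rw [intervalIntegral.integral_mul_deriv_eq_deriv_mul_of_hasDerivWithinAt hf hg'
    hf'.intervalIntegrable hg''.intervalIntegrable, ha, hb]
  ring

theorem energyForm_eq_zero_of_steady
    (hf : ∀ x ∈ [[a, b]], HasDerivWithinAt f (f' x) [[a, b]] x)
    (hf' : ContinuousOn f' [[a, b]]) (hw : ContinuousOn w [[a, b]])
    (hw' : ∀ x ∈ [[a, b]], HasDerivWithinAt w' ((⨍ y in a..b, w y) - w x) [[a, b]] x)
    (ha : w' a = 0) (hb : w' b = 0) :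
    energyForm a b f f' w w' = 0 := by
  have hfc : ContinuousOn f [[a, b]] := fun x hx ↦ (hf x hx).continuousWithinAt
  have hw₀ : ContinuousOn (fun x ↦ w x - ⨍ y in a..b, w y) [[a, b]] :=
    hw.sub continuousOn_const
  have hparts : ∫ x in a..b, f' x * w' x = ∫ x in a..b, f x * (w x - ⨍ y in a..b, w y) := by
    rw [integral_deriv_mul_deriv_of_neumann hf hf' hw' (continuousOn_const.sub hw) ha hb,
      ← intervalIntegral.integral_neg]
    simp only [← mul_neg, neg_sub]
  have hfw' : ContinuousOn (fun x ↦ f' x * w' x) [[a, b]] :=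
    hf'.mul fun x hx ↦ (hw' x hx).continuousWithinAt
  have hf₀w₀ : ContinuousOn (fun x ↦ (f x - ⨍ y in a..b, f y) * (w x - ⨍ y in a..b, w y))
      [[a, b]] := (hfc.sub continuousOn_const).mul hw₀
  rw [energyForm,
    intervalIntegral.integral_sub hfw'.intervalIntegrable hf₀w₀.intervalIntegrable,
    integral_sub_const_mul_sub_interval_average _ (hfc.mul hw₀).intervalIntegrable
      hw.intervalIntegrable, hparts, sub_self]

theorem integral_energy_sub {g g' : ℝ → ℝ} (hf : ContinuousOn f [[a, b]])
    (hf' : ContinuousOn f' [[a, b]]) (hg : ContinuousOn g [[a, b]])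
    (hg' : ContinuousOn g' [[a, b]]) :
    ∫ x in a..b, ((f' x - g' x) ^ 2 - ((f x - g x) - ⨍ y in a..b, (f y - g y)) ^ 2) =
      (∫ x in a..b, (f' x ^ 2 - (f x - ⨍ y in a..b, f y) ^ 2))
        - 2 * energyForm a b f f' g g' + energyForm a b g g' g g' := by
  have hI : ∀ F : ℝ → ℝ, ContinuousOn F [[a, b]] → IntervalIntegrable F volume a b :=
    fun _ hF ↦ hF.intervalIntegrable
  rw [interval_average_sub (hI f hf) (hI g hg), energyForm, energyForm,
    ← intervalIntegral.integral_const_mul,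
    ← intervalIntegral.integral_sub (hI _ (by fun_prop)) (hI _ (by fun_prop)),
    ← intervalIntegral.integral_add (hI _ (by fun_prop)) (hI _ (by fun_prop))]
  congr 1
  ext x
  ring

end

/-- Energy invariance: if w is a steady state (w'' + w − w̄ = 0 with Neumann boundary
conditions) and u ∈ H¹ (here C¹), then E[u − w] = E[u]. -/
theorem stmt17 (a : ℝ) (ha : 0 < a) (u u' w w' : ℝ → ℝ)
    (hu : ∀ x ∈ Icc (0:ℝ) a, HasDerivWithinAt u (u' x) (Icc 0 a) x)
    (hu'c : ContinuousOn u' (Icc 0 a))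
    (hw : ∀ x ∈ Icc (0:ℝ) a, HasDerivWithinAt w (w' x) (Icc 0 a) x)
    (hw' : ∀ x ∈ Icc (0:ℝ) a,
      HasDerivWithinAt w' ((1/a) * (∫ y in (0:ℝ)..a, w y) - w x) (Icc 0 a) x)
    (hb0 : w' 0 = 0) (hba : w' a = 0) :
    (∫ x in (0:ℝ)..a,
        ((u' x - w' x)^2 - ((u x - w x) - (1/a) * ∫ y in (0:ℝ)..a, (u y - w y))^2))
      = ∫ x in (0:ℝ)..a, ((u' x)^2 - (u x - (1/a) * ∫ y in (0:ℝ)..a, u y)^2) := by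
  have hmean : ∀ g : ℝ → ℝ,
      (1/a) * ∫ y in (0:ℝ)..a, g y = ⨍ y in (0:ℝ)..a, g y := by
    intro g
    rw [interval_average_eq, smul_eq_mul, sub_zero, one_div]
  simp only [hmean] at hw' ⊢
  rw [← uIcc_of_le ha.le] at hu hu'c hw hw'
  have huc : ContinuousOn u [[0, a]] := fun x hx ↦ (hu x hx).continuousWithinAt
  have hwc : ContinuousOn w [[0, a]] := fun x hx ↦ (hw x hx).continuousWithinAt
  have hw'c : ContinuousOn w' [[0, a]] := fun x hx ↦ (hw' x hx).continuousWithinAt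
  rw [integral_energy_sub huc hu'c hwc hw'c,
    energyForm_eq_zero_of_steady hu hu'c hwc hw' hb0 hba,
    energyForm_eq_zero_of_steady hw hw'c hwc hw' hb0 hba]
  ring
end
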